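/- Let X₁,...,X_r be independent random variables with X_i ~ Γ_λ(α_i, β) (all with the same rate β), λ ∈ (0,1), and let n be a positive integer with n + max_i α_i < 1/λ. Then E[(X₁+···+X_r)^n] = (1/β^n) ∑_{l₁+···+l_r=n} (n choose l₁,...,l_r) ∏_{i=1}^r [C(l_i+α_i-1, l_i) / C_λ(1-λ(α_i+1), l_i)], where C(x,l)=(x)_l/l! and C_λ(x,l)=(x)_{l,λ}/l!. -/

import Mathlib

open MeasureTheory Finset

/-- The degenerate gamma function `Γ_λ(s) = ∫_0^∞ (1+λt)^{-1/λ} t^{s-1} dt`. -/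
noncomputable def degGamma (lam s : ℝ) : ℝ :=
  ∫ t in Set.Ioi (0:ℝ), (1 + lam * t) ^ (-1/lam) * t ^ (s - 1)

/-- The probability density function of the degenerate gamma distribution `Γ_λ(α,β)`. -/
noncomputable def degGammaPdf (lam α β x : ℝ) : ℝ :=
  if 0 < x then (1 / degGamma lam α) * β * (1 + lam * β * x) ^ (-1/lam) * (β * x) ^ (α - 1)
  else 0

/-- The falling factorial `(x)_n = x(x-1)⋯(x-n+1)`. -/
noncomputable def fallingFactorial (x : ℝ) (n : ℕ) : ℝ :=
  ∏ j ∈ Finset.range n, (x - j)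

/-- The generalized binomial coefficient `C(x,n) = (x)_n / n!`. -/
noncomputable def genBinom (x : ℝ) (n : ℕ) : ℝ := fallingFactorial x n / n.factorial

/-- The degenerate falling factorial `(x)_{n,λ} = x(x-λ)⋯(x-(n-1)λ)`. -/
noncomputable def degFall (x lam : ℝ) (n : ℕ) : ℝ :=
  ∏ j ∈ Finset.range n, (x - j * lam)

/-- The λ-binomial coefficient `C_λ(x,n) = (x)_{n,λ} / n!`. -/
noncomputable def lamBinom (x lam : ℝ) (n : ℕ) : ℝ := degFall x lam n / n.factorial

/-!
Expanding `(X₁ + ⋯ + X_r)ⁿ` multinomially and using independence, the moment is a combination of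
products of the moments `E[Xᵢ^l]`. The substitution `t = βx` gives
`E[X^l] = β^{-l} Γ_λ(α + l) / Γ_λ(α)`, and integrating the derivative of
`t^s (1 + λt)^{1 - 1/λ}` over `(0, ∞)` gives `(1 - (s + 1)λ) Γ_λ(s + 1) = s Γ_λ(s)`. Iterating,
`Γ_λ(α + l) / Γ_λ(α) = ∏_{j<l} (α + j) / (1 - (α + j + 1)λ)`, which is
`C(l + α - 1, l) / C_λ(1 - λ(α + 1), l)`.
-/

open Filter ProbabilityTheory

lemma Finset.le_of_mem_piAntidiag {ι : Type*} [DecidableEq ι] {s : Finset ι} {n : ℕ}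
    {k : ι → ℕ} (hk : k ∈ piAntidiag s n) (i : ι) : k i ≤ n := by
  obtain ⟨hsum, hsupp⟩ := mem_piAntidiag.1 hk
  by_cases hi : i ∈ s
  · exact hsum ▸ single_le_sum (fun j _ ↦ Nat.zero_le (k j)) hi
  · have : k i = 0 := by_contra fun h ↦ hi (hsupp i h)
    omega

section Independence

variable {Ω ι : Type*} [MeasurableSpace Ω] [Fintype ι] {μ : Measure Ω} {X : ι → Ω → ℝ}

lemma ProbabilityTheory.iIndepFun.integrable_fun_prod_comp (hX : iIndepFun X μ)
    (mX : ∀ i, AEMeasurable (X i) μ) {f : ι → ℝ → ℝ} (hf : ∀ i, Integrable (f i) (μ.map (X i))) :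
    Integrable (fun ω ↦ ∏ i, f i (X i ω)) μ := by
  have := hX.isProbabilityMeasure
  have (i : ι) : IsProbabilityMeasure (μ.map (X i)) := Measure.isProbabilityMeasure_map (mX i)
  have hpi : Integrable (fun x : ι → ℝ ↦ ∏ i, f i (x i)) (μ.map fun ω i ↦ X i ω) := by
    rw [hX.map_fun_eq_pi_map mX]
    exact Integrable.fintype_prod hf
  exact hpi.comp_aemeasurable (aemeasurable_pi_lambda _ mX)

lemma ProbabilityTheory.iIndepFun.integral_sum_pow [DecidableEq ι] (hX : iIndepFun X μ)
    (mX : ∀ i, AEMeasurable (X i) μ) (n : ℕ)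
    (hint : ∀ i, ∀ m ≤ n, Integrable (fun x ↦ x ^ m) (μ.map (X i))) :
    ∫ ω, (∑ i, X i ω) ^ n ∂μ =
      ∑ k ∈ piAntidiag univ n, Nat.multinomial univ k * ∏ i, ∫ x, x ^ k i ∂(μ.map (X i)) := by
  have hint' : ∀ k ∈ piAntidiag univ n, ∀ i, Integrable (fun x ↦ x ^ k i) (μ.map (X i)) :=
    fun k hk i ↦ hint i _ (le_of_mem_piAntidiag hk i)
  simp_rw [sum_pow_eq_sum_piAntidiag]
  rw [integral_finsetSum _ fun k hk ↦ (hX.integrable_fun_prod_comp mX (hint' k hk)).const_mul _]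
  refine sum_congr rfl fun k hk ↦ ?_
  rw [integral_const_mul, hX.integral_fun_prod_comp (f := fun i x ↦ x ^ k i) mX
    fun i ↦ (hint' k hk i).aestronglyMeasurable]
  congr 1
  exact prod_congr rfl fun i _ ↦ (integral_map (mX i) (hint' k hk i).aestronglyMeasurable).symm

end Independence

section DegGamma

variable {lam s : ℝ}

lemma continuousOn_degGamma_integrand (hl : 0 ≤ lam) :
    ContinuousOn (fun t : ℝ ↦ (1 + lam * t) ^ (-1/lam) * t ^ (s - 1)) (Set.Ioi 0) := by
  refine ContinuousOn.mul (ContinuousOn.rpow_const (by fun_prop) fun t ht ↦ ?_)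
    (ContinuousOn.rpow_const continuousOn_id fun t ht ↦ Or.inl (ne_of_gt ht))
  have : 0 < t := ht
  exact Or.inl (by positivity)

lemma integrableOn_degGamma_integrand (hl : 0 < lam) (hs₀ : 0 < s) (hs : s < 1 / lam) :
    IntegrableOn (fun t : ℝ ↦ (1 + lam * t) ^ (-1/lam) * t ^ (s - 1)) (Set.Ioi 0) := by
  have hexp : -1 / lam ≤ 0 := div_nonpos_of_nonpos_of_nonneg (by norm_num) hl.le
  have hcont := continuousOn_degGamma_integrand (s := s) hl.le
  rw [← Set.Ioc_union_Ioi_eq_Ioi zero_le_one]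
  refine IntegrableOn.union ?_ ?_
  · have hdom : IntegrableOn (fun t : ℝ ↦ t ^ (s - 1)) (Set.Ioc 0 1) :=
      (intervalIntegrable_iff_integrableOn_Ioc_of_le zero_le_one).1
        (intervalIntegral.intervalIntegrable_rpow' (by linarith))
    refine hdom.mono' ((hcont.mono Set.Ioc_subset_Ioi_self).aestronglyMeasurable
      measurableSet_Ioc) ((ae_restrict_iff' measurableSet_Ioc).2 (ae_of_all _ fun t ht ↦ ?_))
    have ht : 0 < t := ht.1
    rw [Real.norm_of_nonneg (by positivity)]
    exact mul_le_of_le_one_left (by positivity)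
      (Real.rpow_le_one_of_one_le_of_nonpos (by nlinarith) hexp)
  · have hdom : IntegrableOn (fun t : ℝ ↦ lam ^ (-1/lam) * t ^ (s - 1 - 1/lam)) (Set.Ioi 1) :=
      (integrableOn_Ioi_rpow_of_lt (by linarith) one_pos).const_mul _
    refine hdom.mono' ((hcont.mono (Set.Ioi_subset_Ioi zero_le_one)).aestronglyMeasurable
      measurableSet_Ioi) ((ae_restrict_iff' measurableSet_Ioi).2 (ae_of_all _ fun t ht ↦ ?_))
    have ht : 0 < t := zero_lt_one.trans ht
    rw [Real.norm_of_nonneg (by positivity)]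
    calc (1 + lam * t) ^ (-1/lam) * t ^ (s - 1)
        ≤ (lam * t) ^ (-1/lam) * t ^ (s - 1) :=
          mul_le_mul_of_nonneg_right (Real.rpow_le_rpow_of_nonpos (by positivity)
            (le_add_of_nonneg_left zero_le_one) hexp) (by positivity)
      _ = lam ^ (-1/lam) * t ^ (s - 1 - 1/lam) := by
          rw [Real.mul_rpow hl.le ht.le, mul_assoc, ← Real.rpow_add ht]
          ring_nf

lemma degGamma_nonneg (hl : 0 ≤ lam) : 0 ≤ degGamma lam s :=
  setIntegral_nonneg measurableSet_Ioi fun t (ht : 0 < t) ↦ by positivity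

lemma degGamma_pos (hl : 0 < lam) (hs₀ : 0 < s) (hs : s < 1 / lam) : 0 < degGamma lam s := by
  have hpos : ∀ t ∈ Set.Ioi (0:ℝ), 0 < (1 + lam * t) ^ (-1/lam) * t ^ (s - 1) := fun t ht ↦ by
    have : 0 < t := ht
    positivity
  rw [degGamma, setIntegral_pos_iff_support_of_nonneg_ae
    (ae_restrict_of_forall_mem measurableSet_Ioi fun t ht ↦ (hpos t ht).le)
    (integrableOn_degGamma_integrand hl hs₀ hs)]
  exact lt_of_lt_of_le (by simp) (measure_mono fun t ht ↦ ⟨(hpos t ht).ne', ht⟩)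

lemma hasDerivAt_rpow_mul_one_add_mul_rpow (hl : 0 < lam) {t : ℝ} (ht : 0 < t) :
    HasDerivAt (fun t : ℝ ↦ t ^ s * (1 + lam * t) ^ (1 - 1/lam))
      (s * ((1 + lam * t) ^ (-1/lam) * t ^ (s - 1))
        - (1 - (s + 1) * lam) * ((1 + lam * t) ^ (-1/lam) * t ^ (s + 1 - 1))) t := by
  have hb : 0 < 1 + lam * t := by positivity
  have hlin : HasDerivAt (fun t : ℝ ↦ 1 + lam * t) lam t := by
    simpa using ((hasDerivAt_id t).const_mul lam).const_add 1
  refine ((Real.hasDerivAt_rpow_const (p := s) (Or.inl ht.ne')).mul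
    (hlin.rpow_const (p := 1 - 1/lam) (Or.inl hb.ne'))).congr_deriv ?_
  have e₁ : (1 + lam * t) ^ (1 - 1/lam) = (1 + lam * t) ^ (-1/lam) * (1 + lam * t) := by
    rw [← Real.rpow_add_one hb.ne']; ring_nf
  have e₂ : (1 + lam * t) ^ (1 - 1/lam - 1) = (1 + lam * t) ^ (-1/lam) := by ring_nf
  have e₃ : t ^ s = t ^ (s - 1) * t := by rw [← Real.rpow_add_one ht.ne']; ring_nf
  have e₄ : t ^ (s + 1 - 1) = t ^ (s - 1) * t := by rw [← e₃]; ring_nf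
  rw [e₁, e₂, e₃, e₄]
  field_simp
  ring

lemma tendsto_rpow_mul_one_add_mul_rpow_atTop (hl : 0 < lam) (hs₀ : 0 ≤ s)
    (hs : s + 1 < 1 / lam) :
    Tendsto (fun t : ℝ ↦ t ^ s * (1 + lam * t) ^ (1 - 1/lam)) atTop (nhds 0) := by
  have hexp : 1 - 1/lam ≤ 0 := by linarith
  have hlim : Tendsto (fun t : ℝ ↦ lam ^ (1 - 1/lam) * t ^ (-(1/lam - s - 1))) atTop (nhds 0) := by
    simpa using (tendsto_rpow_neg_atTop (by linarith : 0 < 1/lam - s - 1)).const_mul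
      (lam ^ (1 - 1/lam))
  refine squeeze_zero' ?_ ?_ hlim
  · filter_upwards [eventually_gt_atTop 0] with t ht
    positivity
  · filter_upwards [eventually_gt_atTop 0] with t ht
    calc t ^ s * (1 + lam * t) ^ (1 - 1/lam) ≤ t ^ s * (lam * t) ^ (1 - 1/lam) :=
          mul_le_mul_of_nonneg_left (Real.rpow_le_rpow_of_nonpos (by positivity)
            (le_add_of_nonneg_left zero_le_one) hexp) (by positivity)
      _ = lam ^ (1 - 1/lam) * t ^ (-(1/lam - s - 1)) := by
          rw [Real.mul_rpow hl.le ht.le, show -(1/lam - s - 1) = s + (1 - 1/lam) by ring,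
            Real.rpow_add ht]
          ring

lemma degGamma_add_one (hl : 0 < lam) (hs₀ : 0 < s) (hs : s + 1 < 1 / lam) :
    (1 - (s + 1) * lam) * degGamma lam (s + 1) = s * degGamma lam s := by
  have hint₁ := integrableOn_degGamma_integrand hl hs₀ (by linarith)
  have hint₂ := integrableOn_degGamma_integrand hl (by linarith : 0 < s + 1) hs
  have hcont : ContinuousWithinAt (fun t : ℝ ↦ t ^ s * (1 + lam * t) ^ (1 - 1/lam))
      (Set.Ici 0) 0 :=
    ((Real.continuousAt_rpow_const 0 s (Or.inr hs₀.le)).mul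
      ((continuous_const.add (continuous_const.mul continuous_id)).continuousAt.rpow_const
        (Or.inl (by norm_num)))).continuousWithinAt
  have hFTC := integral_Ioi_of_hasDerivAt_of_tendsto hcont
    (fun t ht ↦ hasDerivAt_rpow_mul_one_add_mul_rpow hl ht)
    ((hint₁.const_mul s).sub (hint₂.const_mul _))
    (tendsto_rpow_mul_one_add_mul_rpow_atTop hl hs₀.le hs)
  rw [integral_sub (hint₁.const_mul s) (hint₂.const_mul _), integral_const_mul,
    integral_const_mul] at hFTC
  simp only [Real.zero_rpow hs₀.ne', zero_mul, sub_zero] at hFTC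
  rw [degGamma, degGamma]
  linarith

lemma degGamma_add_nat_mul_prod (hl : 0 < lam) (hs₀ : 0 < s) (l : ℕ) (hs : s + l < 1 / lam) :
    degGamma lam (s + l) * ∏ j ∈ range l, (1 - (s + j + 1) * lam)
      = (∏ j ∈ range l, (s + j)) * degGamma lam s := by
  induction l with
  | zero => simp
  | succ l ih =>
    push_cast at hs ⊢
    have hrec := degGamma_add_one hl (by positivity : 0 < s + l) (by linarith)
    rw [prod_range_succ, prod_range_succ, ← add_assoc]
    linear_combination (∏ j ∈ range l, (1 - (s + j + 1) * lam)) * hrec + (s + l) * ih (by linarith)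

lemma fallingFactorial_nat_add_sub_one (a : ℝ) (l : ℕ) :
    fallingFactorial (l + a - 1) l = ∏ j ∈ range l, (a + j) := by
  rw [fallingFactorial, ← prod_range_reflect]
  refine prod_congr rfl fun j hj ↦ ?_
  have hj := mem_range.1 hj
  rw [Nat.cast_sub (by omega), Nat.cast_sub (by omega)]
  push_cast
  ring

lemma degGamma_add_nat_div (hl : 0 < lam) (hs₀ : 0 < s) (l : ℕ) (hs : s + l < 1 / lam) :
    degGamma lam (s + l) / degGamma lam s
      = genBinom (l + s - 1) l / lamBinom (1 - lam * (s + 1)) lam l := by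
  have hΓ : 0 < degGamma lam s := degGamma_pos hl hs₀ (by linarith [l.cast_nonneg (α := ℝ)])
  have hprod : 0 < ∏ j ∈ range l, (1 - (s + j + 1) * lam) := prod_pos fun j hj ↦ by
    have hj : (j : ℝ) + 1 ≤ l := by exact_mod_cast mem_range.1 hj
    have : (s + j + 1) * lam < 1 := by rw [← lt_div_iff₀ hl]; linarith
    linarith
  have hdegFall : degFall (1 - lam * (s + 1)) lam l = ∏ j ∈ range l, (1 - (s + j + 1) * lam) :=
    prod_congr rfl fun j _ ↦ by ring
  rw [genBinom, lamBinom, fallingFactorial_nat_add_sub_one, hdegFall,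
    div_div_div_cancel_right₀ (by positivity), div_eq_div_iff hΓ.ne' hprod.ne',
    degGamma_add_nat_mul_prod hl hs₀ l hs]

end DegGamma

section DegGammaDistribution

variable {lam a β : ℝ}

noncomputable def degGammaMeasure (lam a β : ℝ) : Measure ℝ :=
  volume.withDensity fun x ↦ ENNReal.ofReal (degGammaPdf lam a β x)

lemma degGammaPdf_nonneg (hl : 0 ≤ lam) (hβ : 0 ≤ β) (x : ℝ) : 0 ≤ degGammaPdf lam a β x := by
  unfold degGammaPdf
  split_ifs with hx
  · have := degGamma_nonneg (s := a) hl
    positivity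
  · exact le_rfl

lemma measurable_degGammaPdf : Measurable (degGammaPdf lam a β) :=
  Measurable.ite measurableSet_Ioi (by fun_prop) measurable_const

lemma pow_mul_degGammaPdf_of_pos (hβ : 0 < β) (l : ℕ) {x : ℝ} (hx : 0 < x) :
    x ^ l * degGammaPdf lam a β x = (β ^ l)⁻¹ * (1 / degGamma lam a) * β *
      ((1 + lam * (β * x)) ^ (-1/lam) * (β * x) ^ (a + l - 1)) := by
  have hβx : 0 < β * x := by positivity
  rw [degGammaPdf, if_pos hx, add_sub_right_comm, Real.rpow_add hβx, Real.rpow_natCast, mul_pow,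
    mul_assoc lam]
  field_simp

lemma support_pow_mul_degGammaPdf_subset (l : ℕ) :
    Function.support (fun x ↦ x ^ l * degGammaPdf lam a β x) ⊆ Set.Ioi 0 :=
  fun x hx ↦ Set.mem_Ioi.2 <| by_contra fun h ↦
    hx (by simp only [degGammaPdf, if_neg h, mul_zero])

lemma integrable_pow_mul_degGammaPdf (hl : 0 < lam) (ha : 0 < a) (hβ : 0 < β) (l : ℕ)
    (h : a + l < 1 / lam) : Integrable fun x ↦ x ^ l * degGammaPdf lam a β x := by
  rw [← integrableOn_iff_integrable_of_support_subset (support_pow_mul_degGammaPdf_subset l)]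
  have hint := (integrableOn_Ioi_comp_mul_left_iff
    (fun t ↦ (1 + lam * t) ^ (-1/lam) * t ^ (a + l - 1)) 0 hβ).2
    (by simpa using integrableOn_degGamma_integrand hl (by positivity) h)
  exact IntegrableOn.congr_fun (hint.const_mul _)
    (fun x hx ↦ (pow_mul_degGammaPdf_of_pos hβ l hx).symm) measurableSet_Ioi

lemma integral_pow_mul_degGammaPdf (hβ : 0 < β) (l : ℕ) :
    ∫ x, x ^ l * degGammaPdf lam a β x = (β ^ l)⁻¹ * (degGamma lam (a + l) / degGamma lam a) := by
  rw [← setIntegral_eq_integral_of_forall_compl_eq_zero fun x hx ↦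
      Function.notMem_support.1 fun h ↦ hx (support_pow_mul_degGammaPdf_subset l h),
    setIntegral_congr_fun measurableSet_Ioi fun x hx ↦ pow_mul_degGammaPdf_of_pos hβ l hx,
    integral_const_mul,
    integral_comp_mul_left_Ioi (fun t ↦ (1 + lam * t) ^ (-1/lam) * t ^ (a + l - 1)) 0 hβ,
    mul_zero, smul_eq_mul, ← degGamma]
  field_simp

lemma integrable_pow_degGammaMeasure (hl : 0 < lam) (ha : 0 < a) (hβ : 0 < β) (l : ℕ)
    (h : a + l < 1 / lam) : Integrable (fun x ↦ x ^ l) (degGammaMeasure lam a β) := by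
  rw [degGammaMeasure, integrable_withDensity_iff measurable_degGammaPdf.ennreal_ofReal
    (ae_of_all _ fun _ ↦ ENNReal.ofReal_lt_top)]
  simp_rw [ENNReal.toReal_ofReal (degGammaPdf_nonneg hl.le hβ.le _)]
  exact integrable_pow_mul_degGammaPdf hl ha hβ l h

lemma integral_pow_degGammaMeasure (hl : 0 ≤ lam) (hβ : 0 < β) (l : ℕ) :
    ∫ x, x ^ l ∂(degGammaMeasure lam a β)
      = (β ^ l)⁻¹ * (degGamma lam (a + l) / degGamma lam a) := by
  rw [degGammaMeasure, integral_withDensity_eq_integral_toReal_smul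
    measurable_degGammaPdf.ennreal_ofReal (ae_of_all _ fun _ ↦ ENNReal.ofReal_lt_top)]
  simp_rw [ENNReal.toReal_ofReal (degGammaPdf_nonneg hl hβ.le _), smul_eq_mul, mul_comm _ (_ ^ l)]
  exact integral_pow_mul_degGammaPdf hβ l

end DegGammaDistribution

theorem degGamma_sum_moment_general
    {Ω : Type*} [MeasureSpace Ω] (P : Measure Ω) [IsProbabilityMeasure P]
    (r : ℕ) (X : Fin r → Ω → ℝ) (hmeas : ∀ i, Measurable (X i))
    (lam β : ℝ) (hlam : lam ∈ Set.Ioo (0:ℝ) 1) (hβ : 0 < β)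
    (α : Fin r → ℝ) (hα : ∀ i, 0 < α i)
    (hindep : ProbabilityTheory.iIndepFun X P)
    (hdist : ∀ i, P.map (X i) =
      volume.withDensity (fun x => ENNReal.ofReal (degGammaPdf lam (α i) β x)))
    (n : ℕ) (hconv : ∀ i, (n : ℝ) + α i < 1 / lam) :
    ∫ ω, (∑ i, X i ω) ^ n ∂P =
      (1 / β ^ n) * ∑ l ∈ Finset.Nat.antidiagonalTuple r n,
        (Nat.multinomial Finset.univ l : ℝ) *
          ∏ i, genBinom (l i + α i - 1) (l i) / lamBinom (1 - lam * (α i + 1)) lam (l i) := by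
  have hl : 0 < lam := hlam.1
  have hconv' : ∀ i, ∀ m ≤ n, α i + m < 1 / lam := fun i m hm ↦ by
    have : (m : ℝ) ≤ n := by exact_mod_cast hm
    linarith [hconv i]
  rw [hindep.integral_sum_pow (fun i ↦ (hmeas i).aemeasurable) n fun i m hm ↦ by
      rw [hdist i]; exact integrable_pow_degGammaMeasure hl (hα i) hβ m (hconv' i m hm),
    ← piAntidiag_univ_fin_eq_antidiagonalTuple, mul_sum]
  refine sum_congr rfl fun k hk ↦ ?_
  have hmoment : ∀ i, ∫ x, x ^ k i ∂(P.map (X i)) = (β ^ k i)⁻¹ *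
      (genBinom (k i + α i - 1) (k i) / lamBinom (1 - lam * (α i + 1)) lam (k i)) := fun i ↦ by
    rw [hdist i, ← degGamma_add_nat_div hl (hα i) (k i) (hconv' i _ (le_of_mem_piAntidiag hk i))]
    exact integral_pow_degGammaMeasure hl.le hβ (k i)
  rw [prod_congr rfl fun i _ ↦ hmoment i, prod_mul_distrib, prod_inv_distrib, prod_pow_eq_pow_sum,
    (mem_piAntidiag.1 hk).1]
  ring

theorem degGamma_sum_moment
    {Ω : Type*} [MeasureSpace Ω] (P : Measure Ω) [IsProbabilityMeasure P]
    (r : ℕ) (hr : 1 ≤ r) (X : Fin r → Ω → ℝ) (hmeas : ∀ i, Measurable (X i))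
    (lam β : ℝ) (hlam : lam ∈ Set.Ioo (0:ℝ) 1) (hβ : 0 < β)
    (α : Fin r → ℝ) (hα : ∀ i, 0 < α i)
    (hindep : ProbabilityTheory.iIndepFun X P)
    (hdist : ∀ i, P.map (X i) =
      volume.withDensity (fun x => ENNReal.ofReal (degGammaPdf lam (α i) β x)))
    (n : ℕ) (hn : 1 ≤ n) (hconv : ∀ i, (n : ℝ) + α i < 1 / lam) :
    ∫ ω, (∑ i, X i ω) ^ n ∂P =
      (1 / β ^ n) * ∑ l ∈ Finset.Nat.antidiagonalTuple r n,
        (Nat.multinomial Finset.univ l : ℝ) *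
          ∏ i, genBinom (l i + α i - 1) (l i) / lamBinom (1 - lam * (α i + 1)) lam (l i) :=
  degGamma_sum_moment_general P r X hmeas lam β hlam hβ α hα hindep hdist n hconv
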